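/- Let A be a nonnegative real N×n matrix and S an n×n real matrix. Fix indices j, k. The vector d defined by d_i = Σ_j Σ_k A_{ij} S_{jk} A_{ik} (i.e., d = diag(A S Aᵀ)) does not depend on the entry S_{jk} if and only if (Aᵀ A)_{jk} = 0. -/
import Mathlib


open Matrix

theorem stmt0 {N n : ℕ} (A : Matrix (Fin N) (Fin n) ℝ)
    (hA : ∀ i j, 0 ≤ A i j) (j k : Fin n) :
    (∀ S S' : Matrix (Fin n) (Fin n) ℝ,
        (∀ j' k', (j', k') ≠ (j, k) → S j' k' = S' j' k') →
        ∀ i, (A * S * Aᵀ) i i = (A * S' * Aᵀ) i i) ↔ (Aᵀ * A) j k = 0 := by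
  have key : ∀ (S : Matrix (Fin n) (Fin n) ℝ) (i : Fin N),
      (A * S * Aᵀ) i i = ∑ a, ∑ b, A i a * S a b * A i b := by
    intro S i
    simp only [Matrix.mul_apply, Matrix.transpose_apply, Finset.sum_mul]
    rw [Finset.sum_comm]
  constructor
  · intro h
    have h0 := h (Matrix.single j k 1) 0 (by
      intro j' k' hne
      rw [Matrix.single_apply_of_ne]
      · rfl
      · intro hjk
        obtain ⟨rfl, rfl⟩ := hjk
        exact hne rfl)
    have hz : ∀ i, A i j * A i k = 0 := by
      intro i
      have := h0 i
      rw [key, key] at this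
      simpa [Matrix.single, ite_and, Finset.sum_ite_eq, mul_comm,
        mul_assoc, mul_left_comm] using this
    rw [Matrix.mul_apply]
    simp only [Matrix.transpose_apply]
    exact Finset.sum_eq_zero fun i _ => hz i
  · intro h S S' hSS' i
    have hz : ∀ i, A i j * A i k = 0 := by
      rw [Matrix.mul_apply] at h
      simp only [Matrix.transpose_apply] at h
      have := (Finset.sum_eq_zero_iff_of_nonneg
        (fun i _ => mul_nonneg (hA i j) (hA i k))).mp h
      intro i; exact this i (Finset.mem_univ i)
    rw [key, key]
    refine Finset.sum_congr rfl fun a _ => Finset.sum_congr rfl fun b _ => ?_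
    by_cases hab : (a, b) = (j, k)
    · obtain ⟨rfl, rfl⟩ := Prod.ext_iff.mp hab
      rcases mul_eq_zero.mp (hz i) with h0 | h0 <;> simp [h0]
    · rw [hSS' a b hab]
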